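/- arXiv:2108.01800 — 2 statements merged into one kernel-verified Lean document; each statement's English description precedes it below -/
import Mathlib

section
/- Let $g_1, g_2 : [a_1, a_2] \to \mathbb{R}$ be continuous functions such that $g_1$ has finite right-hand and left-hand derivatives at every point of $(a_1, a_2)$, $g_2$ is continuously differentiable on $(a_1, a_2)$ with $g_2'(x) > 0$ for all $x \in (a_1, a_2)$, and $g_2(a_2) \neq g_2(a_1)$. Then there exists $\zeta \in (a_1, a_2)$ such that $\min\{g_1'^-(\zeta), g_1'^+(\zeta)\}/g_2'(\zeta) \leq (g_1(a_2) - g_1(a_1))/(g_2(a_2) - g_2(a_1)) \leq \max\{g_1'^-(\zeta), g_1'^+(\zeta)\}/g_2'(\zeta)$. -/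
open Set Filter

lemma locmax_right {f : ℝ → ℝ} {x d : ℝ} (hf : HasDerivWithinAt f d (Ici x) x)
    (hx : IsLocalMax f x) : d ≤ 0 := by
  have ht := hasDerivWithinAt_iff_tendsto_slope.1 hf
  rw [Ici_sdiff_left] at ht
  refine le_of_tendsto ht ?_
  filter_upwards [nhdsWithin_le_nhds hx, self_mem_nhdsWithin] with y hy (hy' : x < y)
  rw [slope_def_field]
  exact div_nonpos_of_nonpos_of_nonneg (by linarith) (by linarith)

lemma locmax_left {f : ℝ → ℝ} {x d : ℝ} (hf : HasDerivWithinAt f d (Iic x) x)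
    (hx : IsLocalMax f x) : 0 ≤ d := by
  have ht := hasDerivWithinAt_iff_tendsto_slope.1 hf
  rw [Iic_diff_right] at ht
  refine ge_of_tendsto ht ?_
  filter_upwards [nhdsWithin_le_nhds hx, self_mem_nhdsWithin] with y hy (hy' : y < x)
  rw [slope_def_field, div_nonneg_iff]
  exact Or.inr ⟨by linarith, by linarith⟩

lemma locmin_right {f : ℝ → ℝ} {x d : ℝ} (hf : HasDerivWithinAt f d (Ici x) x)
    (hx : IsLocalMin f x) : 0 ≤ d := by
  have := locmax_right hf.neg hx.neg
  linarith

lemma locmin_left {f : ℝ → ℝ} {x d : ℝ} (hf : HasDerivWithinAt f d (Iic x) x)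
    (hx : IsLocalMin f x) : d ≤ 0 := by
  have := locmax_left hf.neg hx.neg
  linarith

lemma conclude {A B C D d : ℝ} (hd : 0 < d) (hC : C ≠ 0)
    (h1 : min (C*A) (C*B) ≤ D*d) (h2 : D*d ≤ max (C*A) (C*B)) :
    min A B / d ≤ D / C ∧ D / C ≤ max A B / d := by
  rcases hC.lt_or_gt with hC'|hC'
  · have e1 : C * max A B ≤ D * d :=
      le_trans (le_min (by nlinarith [le_max_left A B]) (by nlinarith [le_max_right A B])) h1
    have e2 : D * d ≤ C * min A B :=
      h2.trans (max_le (by nlinarith [min_le_left A B]) (by nlinarith [min_le_right A B]))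
    constructor
    · rw [le_div_iff_of_neg hC', div_mul_eq_mul_div, le_div_iff₀ hd]
      nlinarith
    · rw [div_le_iff_of_neg hC', div_mul_eq_mul_div, div_le_iff₀ hd]
      nlinarith
  · have e1 : C * min A B ≤ D * d :=
      le_trans (le_min (by nlinarith [min_le_left A B]) (by nlinarith [min_le_right A B])) h1
    have e2 : D * d ≤ C * max A B :=
      h2.trans (max_le (by nlinarith [le_max_left A B]) (by nlinarith [le_max_right A B]))
    constructor
    · rw [div_le_div_iff₀ hd hC']; nlinarith
    · rw [div_le_div_iff₀ hC' hd]; nlinarith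


theorem stmt0 (a₁ a₂ : ℝ) (h : a₁ < a₂) (g₁ g₂ d₁m d₁p d₂ : ℝ → ℝ)
    (hg₁c : ContinuousOn g₁ (Icc a₁ a₂)) (hg₂c : ContinuousOn g₂ (Icc a₁ a₂))
    (hd₁m : ∀ x ∈ Ioo a₁ a₂, HasDerivWithinAt g₁ (d₁m x) (Iic x) x)
    (hd₁p : ∀ x ∈ Ioo a₁ a₂, HasDerivWithinAt g₁ (d₁p x) (Ici x) x)
    (hd₂ : ∀ x ∈ Ioo a₁ a₂, HasDerivAt g₂ (d₂ x) x)
    (hd₂c : ContinuousOn d₂ (Ioo a₁ a₂))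
    (hd₂pos : ∀ x ∈ Ioo a₁ a₂, 0 < d₂ x)
    (hne : g₂ a₂ ≠ g₂ a₁) :
    ∃ ζ ∈ Ioo a₁ a₂,
      min (d₁m ζ) (d₁p ζ) / d₂ ζ ≤ (g₁ a₂ - g₁ a₁) / (g₂ a₂ - g₂ a₁) ∧
      (g₁ a₂ - g₁ a₁) / (g₂ a₂ - g₂ a₁) ≤ max (d₁m ζ) (d₁p ζ) / d₂ ζ := by
  set C := g₂ a₂ - g₂ a₁ with hCdef
  set D := g₁ a₂ - g₁ a₁ with hDdef
  have hC : C ≠ 0 := sub_ne_zero.2 hne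
  set f : ℝ → ℝ := fun x => C * g₁ x - D * g₂ x with hfdef
  have hfc : ContinuousOn f (Icc a₁ a₂) :=
    (continuousOn_const.mul hg₁c).sub (continuousOn_const.mul hg₂c)
  have hfeq : f a₂ = f a₁ := by simp only [hfdef, hCdef, hDdef]; ring
  have hfm : ∀ x ∈ Ioo a₁ a₂, HasDerivWithinAt f (C * d₁m x - D * d₂ x) (Iic x) x :=
    fun x hx => ((hd₁m x hx).const_mul C).sub (((hd₂ x hx).hasDerivWithinAt).const_mul D)
  have hfp : ∀ x ∈ Ioo a₁ a₂, HasDerivWithinAt f (C * d₁p x - D * d₂ x) (Ici x) x :=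
    fun x hx => ((hd₁p x hx).const_mul C).sub (((hd₂ x hx).hasDerivWithinAt).const_mul D)
  suffices key : ∃ ζ ∈ Ioo a₁ a₂,
      min (C * d₁m ζ) (C * d₁p ζ) ≤ D * d₂ ζ ∧ D * d₂ ζ ≤ max (C * d₁m ζ) (C * d₁p ζ) by
    obtain ⟨ζ, hζ, h1, h2⟩ := key
    exact ⟨ζ, hζ, conclude (hd₂pos ζ hζ) hC h1 h2⟩
  obtain ⟨u, hu, humax⟩ := isCompact_Icc.exists_isMaxOn (nonempty_Icc.2 h.le) hfc
  obtain ⟨v, hv, hvmin⟩ := isCompact_Icc.exists_isMinOn (nonempty_Icc.2 h.le) hfc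
  by_cases hcase : f a₁ < f u
  · have hu1 : u ≠ a₁ := by rintro rfl; exact lt_irrefl _ hcase
    have hu2 : u ≠ a₂ := by rintro rfl; rw [hfeq] at hcase; exact lt_irrefl _ hcase
    have huI : u ∈ Ioo a₁ a₂ := ⟨hu.1.lt_of_ne (Ne.symm hu1), hu.2.lt_of_ne hu2⟩
    have hloc : IsLocalMax f u := by
      filter_upwards [Icc_mem_nhds huI.1 huI.2] with y hy using humax hy
    refine ⟨u, huI, ?_, ?_⟩
    · exact le_trans (min_le_right _ _) (by linarith [locmax_right (hfp u huI) hloc])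
    · exact le_trans (by linarith [locmax_left (hfm u huI) hloc]) (le_max_left _ _)
  · by_cases hcase2 : f v < f a₁
    · have hv1 : v ≠ a₁ := by rintro rfl; exact lt_irrefl _ hcase2
      have hv2 : v ≠ a₂ := by rintro rfl; rw [hfeq] at hcase2; exact lt_irrefl _ hcase2
      have hvI : v ∈ Ioo a₁ a₂ := ⟨hv.1.lt_of_ne (Ne.symm hv1), hv.2.lt_of_ne hv2⟩
      have hloc : IsLocalMin f v := by
        filter_upwards [Icc_mem_nhds hvI.1 hvI.2] with y hy using hvmin hy
      refine ⟨v, hvI, ?_, ?_⟩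
      · exact le_trans (min_le_left _ _) (by linarith [locmin_left (hfm v hvI) hloc])
      · exact le_trans (by linarith [locmin_right (hfp v hvI) hloc]) (le_max_right _ _)
    · push_neg at hcase hcase2
      set ζ := (a₁ + a₂) / 2 with hζdef
      have hζI : ζ ∈ Ioo a₁ a₂ := ⟨by simp [hζdef]; linarith, by simp [hζdef]; linarith⟩
      have hconst : ∀ y ∈ Icc a₁ a₂, f y = f a₁ :=
        fun y hy => le_antisymm ((humax hy).trans hcase) (hcase2.trans (hvmin hy))
      have hfζ : f ζ = f a₁ := hconst ζ (Ioo_subset_Icc_self hζI)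
      have hlmax : IsLocalMax f ζ := by
        filter_upwards [Icc_mem_nhds hζI.1 hζI.2] with y hy
        rw [hconst y hy, hfζ]
      have hlmin : IsLocalMin f ζ := by
        filter_upwards [Icc_mem_nhds hζI.1 hζI.2] with y hy
        rw [hconst y hy, hfζ]
      refine ⟨ζ, hζI, ?_, ?_⟩
      · exact le_trans (min_le_right _ _) (by linarith [locmax_right (hfp ζ hζI) hlmax])
      · exact le_trans (by linarith [locmax_left (hfm ζ hζI) hlmax]) (le_max_left _ _)
end

section
/- Let $\ell : (0, \infty) \to (0, \infty)$ be differentiable, non-decreasing, with $\ell'(u) > 0$ for all $u$, and suppose $\ell'$ is non-decreasing on $[d, \infty)$ and $\ell'(d) \leq \ell'(u)$ for all $u \geq d$. Then for every $x > d$ and every $z > x - d$: $\Big[\frac{\ell(x-z)}{\ell'(x)} - \frac{\ell(x)}{\ell'(x)}\Big] - \Big[\frac{\ell(x-z)}{\ell'(d)} - \frac{\ell(d)}{\ell'(d)} - (x-d)\Big] \geq 0$, where $\ell$ is extended by an arbitrary non-negative non-decreasing function on $(-\infty, 0]$ with $\ell(y) \leq \ell(d)$ for $y \leq d$. -/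
/-!
Write `p = f' d ≤ q = f' x`. The left-hand side splits as
`(f d - f (x-z)) (1/p - 1/q) + ((x - d) - (f x - f d)/q)`.
The first term is non-negative because `x - z < d`; the second because a function with
non-decreasing derivative has secant slope on `[d, x]` at most its derivative at `x`.
-/

open Set

theorem div_sub_div_sub_le_div_sub_div {a b c h p q : ℝ} (hp : 0 < p) (hpq : p ≤ q)
    (hab : a ≤ b) (hc : c - b ≤ q * h) : a / p - b / p - h ≤ a / q - c / q := by
  have hq : 0 < q := hp.trans_le hpq
  have key : (a / q - c / q) - (a / p - b / p - h)
      = (b - a) * (1 / p - 1 / q) + (q * h - (c - b)) / q := by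
    field_simp
    ring
  have hinv : 1 / q ≤ 1 / p := one_div_le_one_div_of_le hp hpq
  have : 0 ≤ (b - a) * (1 / p - 1 / q) + (q * h - (c - b)) / q := by
    apply add_nonneg
    · exact mul_nonneg (by linarith) (by linarith)
    · exact div_nonneg (by linarith) hq.le
  linarith

theorem sub_le_mul_sub_of_hasDerivAt_of_monotoneOn {f f' : ℝ → ℝ} {a b : ℝ} (hab : a ≤ b)
    (hf : ∀ u ∈ Icc a b, HasDerivAt f (f' u) u) (hmono : MonotoneOn f' (Icc a b)) :
    f b - f a ≤ f' b * (b - a) := by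
  have hb : b ∈ Icc a b := right_mem_Icc.mpr hab
  refine (convex_Icc a b).image_sub_le_mul_sub_of_deriv_le
    (fun u hu => (hf u hu).continuousAt.continuousWithinAt)
    (fun u hu => (hf u (interior_subset hu)).differentiableAt.differentiableWithinAt)
    (fun u hu => ?_) a (left_mem_Icc.mpr hab) b hb hab
  rw [(hf u (interior_subset hu)).deriv]
  exact hmono (interior_subset hu) hb (interior_subset hu).2

theorem stmt13_general (f f' : ℝ → ℝ) (d : ℝ) (hd : 0 < d)
    (hderiv : ∀ u ∈ Set.Ioi (0:ℝ), HasDerivAt f (f' u) u)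
    (hpos : ∀ u ∈ Set.Ioi (0:ℝ), 0 < f' u)
    (hle : ∀ y ≤ d, f y ≤ f d)
    (hmono : MonotoneOn f' (Set.Ici d)) :
    ∀ x > d, ∀ z > x - d,
      0 ≤ (f (x-z) / f' x - f x / f' x) - (f (x-z) / f' d - f d / f' d - (x - d)) := by
  intro x hx z hz
  have hslope : f x - f d ≤ f' x * (x - d) :=
    sub_le_mul_sub_of_hasDerivAt_of_monotoneOn hx.le
      (fun u hu => hderiv u (hd.trans_le hu.1)) (hmono.mono Icc_subset_Ici_self)
  have hder : f' d ≤ f' x := hmono self_mem_Ici hx.le hx.le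
  exact sub_nonneg.mpr <|
    div_sub_div_sub_le_div_sub_div (hpos d hd) hder (hle _ (by linarith)) hslope

theorem stmt13 (f f' : ℝ → ℝ) (d : ℝ) (hd : 0 < d)
    (hderiv : ∀ u ∈ Set.Ioi (0:ℝ), HasDerivAt f (f' u) u)
    (hpos : ∀ u ∈ Set.Ioi (0:ℝ), 0 < f' u)
    (hfnonneg : ∀ y : ℝ, 0 ≤ f y)
    (hfmono : MonotoneOn f (Set.Ioi 0))
    (hle : ∀ y ≤ d, f y ≤ f d)
    (hmono : MonotoneOn f' (Set.Ici d)) :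
    ∀ x > d, ∀ z > x - d,
      0 ≤ (f (x-z) / f' x - f x / f' x) - (f (x-z) / f' d - f d / f' d - (x - d)) :=
  stmt13_general f f' d hd hderiv hpos hle hmono
end
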